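/- For σ > 0, γ > 0, the Dual Voigt mixing density is the Levy(1/σ², γ²/σ⁴) density truncated above at 2/σ² and reflected about 2/σ²: (a) letting f_L(v) = [(γ/σ²)/√(2π)] · (v − 1/σ²)^{−3/2} · e^{−(γ/σ²)²/(2(v − 1/σ²))} for v > 1/σ² be the Levy(1/σ², γ²/σ⁴) density, one has ∫_{1/σ²}^{2/σ²} f_L(v) dv = 2(1 − Φ(γ/σ)); and (b) for 0 < v < 1/σ², q(v) = f_L(2/σ² − v)/(2(1 − Φ(γ/σ))), where q(v) = [1/(2(1 − Φ(γ/σ)))] · [(γ/σ²)/√(2π)] · (1/σ² − v)^{−3/2} · e^{−(γ/σ²)²/(2(1/σ² − v))}. In particular ∫_0^{1/σ²} q(v) dv = 1. -/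

import Mathlib

/-!
The Levy(0, c²) law is the law of c²/Z² for a standard normal Z, so the substitution u = c²/s²
carries its mass on (0, b) to twice the standard normal tail beyond c/√b. Part (a) is this
computation after the shift by 1/σ²; part (b) is an algebraic identity, and the normalisation of q
follows from (a) by the reflection v ↦ 2/σ² − v.
-/

open MeasureTheory ProbabilityTheory Real

/-- The standard normal cumulative distribution function. -/
noncomputable def stdNormalCDF (t : ℝ) : ℝ :=
  ∫ s in Set.Iic t, (1 / Real.sqrt (2 * π)) * Real.exp (-s ^ 2 / 2)

/-- The Levy(1/σ², γ²/σ⁴) density, for v > 1/σ². -/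
noncomputable def levyDensitySigma (σ γ : ℝ) (v : ℝ) : ℝ :=
  (γ / σ ^ 2) / Real.sqrt (2 * π) * (v - 1 / σ ^ 2) ^ (-(3 : ℝ) / 2) *
    Real.exp (-(γ / σ ^ 2) ^ 2 / (2 * (v - 1 / σ ^ 2)))

/-- The mixing density of the Dual Voigt(γ, σ²), supported on (0, 1/σ²). -/
noncomputable def dualVoigtMixingDensity (σ γ : ℝ) (v : ℝ) : ℝ :=
  1 / (2 * (1 - stdNormalCDF (γ / σ))) * ((γ / σ ^ 2) / Real.sqrt (2 * π)) *
    (1 / σ ^ 2 - v) ^ (-(3 : ℝ) / 2) * Real.exp (-(γ / σ ^ 2) ^ 2 / (2 * (1 / σ ^ 2 - v)))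

lemma stdNormal_density_eq_gaussianPDFReal (s : ℝ) :
    (1 / √(2 * π)) * exp (-s ^ 2 / 2) = gaussianPDFReal 0 1 s := by
  simp [gaussianPDFReal]

lemma one_sub_stdNormalCDF_eq_integral_Ioi (t : ℝ) :
    1 - stdNormalCDF t = ∫ s in Set.Ioi t, (1 / √(2 * π)) * exp (-s ^ 2 / 2) := by
  simp_rw [stdNormalCDF, stdNormal_density_eq_gaussianPDFReal]
  rw [← integral_gaussianPDFReal_eq_one 0 one_ne_zero,
    ← intervalIntegral.integral_Iic_add_Ioi (integrable_gaussianPDFReal 0 1).integrableOn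
      (integrable_gaussianPDFReal 0 1).integrableOn]
  ring

lemma one_sub_stdNormalCDF_pos (t : ℝ) : 0 < 1 - stdNormalCDF t := by
  simp_rw [one_sub_stdNormalCDF_eq_integral_Ioi, stdNormal_density_eq_gaussianPDFReal]
  rw [setIntegral_pos_iff_support_of_nonneg_ae
    (ae_of_all _ fun s => (gaussianPDFReal_pos 0 1 s one_ne_zero).le)
    (integrable_gaussianPDFReal 0 1).integrableOn]
  have : Function.support (gaussianPDFReal 0 1) = Set.univ :=
    Set.eq_univ_of_forall fun s => (gaussianPDFReal_pos 0 1 s one_ne_zero).ne'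
  simp [this]

/-- The density of the Levy(0, c²) distribution. -/
noncomputable def levyPDF (c u : ℝ) : ℝ :=
  c / √(2 * π) * u ^ (-(3 : ℝ) / 2) * exp (-c ^ 2 / (2 * u))

lemma levyDensitySigma_eq_levyPDF (σ γ v : ℝ) :
    levyDensitySigma σ γ v = levyPDF (γ / σ ^ 2) (v - 1 / σ ^ 2) := rfl

lemma image_div_sq_Ioi {b c : ℝ} (hb : 0 < b) (hc : 0 < c) :
    (fun s : ℝ => c ^ 2 / s ^ 2) '' Set.Ioi (c / √b) = Set.Ioo 0 b := by
  ext u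
  constructor
  · rintro ⟨s, hs, rfl⟩
    have hs₀ : 0 < s := (by positivity : 0 < c / √b).trans hs
    refine ⟨by positivity, ?_⟩
    calc c ^ 2 / s ^ 2 < c ^ 2 / (c / √b) ^ 2 := by gcongr; exact hs
      _ = b := by rw [div_pow, sq_sqrt hb.le]; field_simp
  · rintro ⟨hu₀, hub⟩
    refine ⟨c / √u, ?_, ?_⟩
    · exact div_lt_div_of_pos_left hc (sqrt_pos.mpr hu₀) (sqrt_lt_sqrt hu₀.le hub)
    · simp only [div_pow, sq_sqrt hu₀.le]
      field_simp

lemma injOn_div_sq_Ioi_zero {c : ℝ} (hc : c ≠ 0) :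
    Set.InjOn (fun s : ℝ => c ^ 2 / s ^ 2) (Set.Ioi 0) := by
  intro s hs t ht hst
  have hsq : s ^ 2 = t ^ 2 := by
    simpa [div_eq_div_iff, hc, (Set.mem_Ioi.mp hs).ne', (Set.mem_Ioi.mp ht).ne'] using hst.symm
  exact (pow_left_inj₀ (le_of_lt hs) (le_of_lt ht) two_ne_zero).mp hsq

lemma hasDerivAt_div_sq (c : ℝ) {s : ℝ} (hs : s ≠ 0) :
    HasDerivAt (fun s : ℝ => c ^ 2 / s ^ 2) (-2 * c ^ 2 / s ^ 3) s := by
  refine ((hasDerivAt_const s (c ^ 2)).div (hasDerivAt_pow 2 s) (pow_ne_zero 2 hs)).congr_deriv ?_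
  field_simp
  ring

lemma abs_deriv_mul_levyPDF_div_sq {c s : ℝ} (hc : 0 < c) (hs : 0 < s) :
    |-2 * c ^ 2 / s ^ 3| * levyPDF c (c ^ 2 / s ^ 2) =
      2 * ((1 / √(2 * π)) * exp (-s ^ 2 / 2)) := by
  have hpow : (c ^ 2 / s ^ 2) ^ (-(3 : ℝ) / 2) = (s / c) ^ 3 := by
    rw [← div_pow, ← rpow_natCast, ← rpow_mul (by positivity), ← inv_div,
      inv_rpow (by positivity), ← rpow_neg (by positivity)]
    norm_num
  have hexp : -c ^ 2 / (2 * (c ^ 2 / s ^ 2)) = -s ^ 2 / 2 := by field_simp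
  rw [levyPDF, hpow, hexp, abs_div, abs_of_neg (by nlinarith), abs_of_pos (by positivity)]
  field_simp

lemma integral_Ioo_levyPDF {b c : ℝ} (hb : 0 < b) (hc : 0 < c) :
    ∫ u in Set.Ioo 0 b, levyPDF c u = 2 * (1 - stdNormalCDF (c / √b)) := by
  have hs₀ : 0 < c / √b := by positivity
  rw [← image_div_sq_Ioi hb hc, integral_image_eq_integral_abs_deriv_smul measurableSet_Ioi
    (fun s hs => (hasDerivAt_div_sq c (hs₀.trans hs).ne').hasDerivWithinAt)
    ((injOn_div_sq_Ioi_zero hc.ne').mono (Set.Ioi_subset_Ioi hs₀.le)),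
    one_sub_stdNormalCDF_eq_integral_Ioi, ← integral_const_mul]
  exact setIntegral_congr_fun measurableSet_Ioi fun s hs =>
    abs_deriv_mul_levyPDF_div_sq hc (hs₀.trans hs)

lemma setIntegral_Ioo_comp_sub_right (f : ℝ → ℝ) {a b : ℝ} (hab : a ≤ b) (d : ℝ) :
    ∫ v in Set.Ioo a b, f (v - d) = ∫ v in Set.Ioo (a - d) (b - d), f v := by
  rw [← integral_Ioc_eq_integral_Ioo, ← integral_Ioc_eq_integral_Ioo,
    ← intervalIntegral.integral_of_le hab, ← intervalIntegral.integral_of_le (by linarith),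
    intervalIntegral.integral_comp_sub_right]

lemma setIntegral_Ioo_comp_sub_left (f : ℝ → ℝ) {a b : ℝ} (hab : a ≤ b) (d : ℝ) :
    ∫ v in Set.Ioo a b, f (d - v) = ∫ v in Set.Ioo (d - b) (d - a), f v := by
  rw [← integral_Ioc_eq_integral_Ioo, ← integral_Ioc_eq_integral_Ioo,
    ← intervalIntegral.integral_of_le hab, ← intervalIntegral.integral_of_le (by linarith),
    intervalIntegral.integral_comp_sub_left]

/-- the Dual Voigt mixing density is the Levy(1/σ², γ²/σ⁴) density truncated
above at 2/σ² and reflected about 2/σ²: (a) the Levy mass of (1/σ², 2/σ²) is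
2(1 − Φ(γ/σ)); (b) on (0, 1/σ²), q(v) = f_L(2/σ² − v)/(2(1 − Φ(γ/σ))); in particular
q integrates to one over (0, 1/σ²). -/
theorem dualVoigt_mixing_is_truncated_reflected_levy (σ γ : ℝ) (hσ : 0 < σ) (hγ : 0 < γ) :
    (∫ v in Set.Ioo (1 / σ ^ 2) (2 / σ ^ 2), levyDensitySigma σ γ v) =
      2 * (1 - stdNormalCDF (γ / σ)) ∧
    (∀ v ∈ Set.Ioo (0 : ℝ) (1 / σ ^ 2),
      dualVoigtMixingDensity σ γ v =
        levyDensitySigma σ γ (2 / σ ^ 2 - v) / (2 * (1 - stdNormalCDF (γ / σ)))) ∧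
    (∫ v in Set.Ioo (0 : ℝ) (1 / σ ^ 2), dualVoigtMixingDensity σ γ v) = 1 := by
  have hle : 1 / σ ^ 2 ≤ 2 / σ ^ 2 := by gcongr; norm_num
  have hscale : γ / σ ^ 2 / √(1 / σ ^ 2) = γ / σ := by
    rw [one_div, sqrt_inv, sqrt_sq hσ.le]; field_simp
  have levy_mass : ∫ v in Set.Ioo (1 / σ ^ 2) (2 / σ ^ 2), levyDensitySigma σ γ v =
      2 * (1 - stdNormalCDF (γ / σ)) := by
    simp_rw [levyDensitySigma_eq_levyPDF]
    rw [setIntegral_Ioo_comp_sub_right _ hle, sub_self,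
      show 2 / σ ^ 2 - 1 / σ ^ 2 = 1 / σ ^ 2 by ring, ← hscale,
      integral_Ioo_levyPDF (by positivity) (by positivity)]
  have reflection : ∀ v ∈ Set.Ioo (0 : ℝ) (1 / σ ^ 2), dualVoigtMixingDensity σ γ v =
      levyDensitySigma σ γ (2 / σ ^ 2 - v) / (2 * (1 - stdNormalCDF (γ / σ))) := by
    intro v _
    rw [dualVoigtMixingDensity, levyDensitySigma,
      show 2 / σ ^ 2 - v - 1 / σ ^ 2 = 1 / σ ^ 2 - v by ring]
    ring
  refine ⟨levy_mass, reflection, ?_⟩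
  rw [setIntegral_congr_fun measurableSet_Ioo reflection, integral_div,
    setIntegral_Ioo_comp_sub_left _ (by positivity), sub_zero,
    show 2 / σ ^ 2 - 1 / σ ^ 2 = 1 / σ ^ 2 by ring, levy_mass,
    div_self (by linarith [one_sub_stdNormalCDF_pos (γ / σ)])]
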